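/- arXiv:2208.06513 — 11 statements merged into one kernel-verified Lean document; each statement's English description precedes it below -/
import Mathlib

section
/- Suppose that for every port ℓ the coflows active on ℓ can be sequenced on that port so as to meet their deadlines; formally, for each ℓ ∈ L there is a bijective enumeration τ_ℓ of C_ℓ = { j ∈ C : p ℓ j > 0 } such that for every index k, ∑_{h ≤ k} p ℓ (τ_ℓ h) ≤ D (τ_ℓ k). Then there exists a single primal-feasible enumeration σ of all of C, i.e., one global priority order which simultaneously, on every port, meets the deadline of each coflow active on that port. (Paper's Theorem 3: if the primal scheduling problem is feasible, it is solved by a primal-feasible σ-order.) -/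
/-- Paper's Theorem 3: if for every port the coflows active on that port can be
sequenced to meet their deadlines, then there is a single primal-feasible
σ-order of all coflows. -/
theorem primal_feasible_sigma_order_exists
    {L C : Type*} [Fintype L] [Nonempty L] [Fintype C] [Nonempty C]
    (N : ℕ) (hN : Fintype.card C = N)
    (p : L → C → ℝ) (hp : ∀ ℓ j, 0 ≤ p ℓ j)
    (D : C → ℝ) (hD : ∀ j, 0 < D j)
    (hport : ∀ ℓ : L,
      ∃ τ : Fin ((Finset.univ.filter (fun j => 0 < p ℓ j)).card) → C,
        Function.Injective τ ∧
        (∀ i, τ i ∈ Finset.univ.filter (fun j => 0 < p ℓ j)) ∧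
        (∀ k, ∑ h ∈ Finset.Iic k, p ℓ (τ h) ≤ D (τ k))) :
    ∃ σ : Fin N → C, Function.Bijective σ ∧
      ∀ k : Fin N, ∀ ℓ : L, 0 < p ℓ (σ k) →
        ∑ h ∈ Finset.Iic k, p ℓ (σ h) ≤ D (σ k) := by
  classical
  -- choose σ sorted by nondecreasing deadline
  set e : Fin N ≃ C := (Fintype.equivFinOfCardEq hN).symm with he
  set g : Fin N → ℝ := D ∘ e with hg
  set σ : Fin N → C := fun i => e (Tuple.sort g i) with hσ
  have hbij : Function.Bijective σ := ((Tuple.sort g).trans e).bijective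
  have hmono : Monotone (fun i => D (σ i)) := Tuple.monotone_sort g
  refine ⟨σ, hbij, ?_⟩
  intro k ℓ hpk
  set A : Finset C := Finset.univ.filter (fun j => 0 < p ℓ j) with hAdef
  obtain ⟨τ, hτinj, hτmem, hτsum⟩ := hport ℓ
  -- τ is a bijection onto A
  have hιinj : Function.Injective (fun i : Fin A.card => (⟨τ i, hτmem i⟩ : {x // x ∈ A})) := by
    intro a b hab
    exact hτinj (congrArg Subtype.val hab)
  have hιbij : Function.Bijective (fun i : Fin A.card => (⟨τ i, hτmem i⟩ : {x // x ∈ A})) := by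
    rw [Fintype.bijective_iff_injective_and_card]
    exact ⟨hιinj, by simp [Fintype.card_coe]⟩
  have hsurj : ∀ a : {x // x ∈ A}, ∃ i, τ i = a.1 := by
    intro a
    obtain ⟨i, hi⟩ := hιbij.surjective a
    exact ⟨i, congrArg Subtype.val hi⟩
  have hkA : σ k ∈ A := by simp [hAdef, hpk]
  -- the index function
  set F : Fin N → Fin A.card := fun h =>
    if hm : σ h ∈ A then (hsurj ⟨σ h, hm⟩).choose else (hsurj ⟨σ k, hkA⟩).choose with hF
  have hFspec : ∀ h, σ h ∈ A → τ (F h) = σ h := by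
    intro h hm
    simp only [hF, dif_pos hm]
    exact (hsurj ⟨σ h, hm⟩).choose_spec
  set T : Finset (Fin N) := (Finset.Iic k).filter (fun h => σ h ∈ A) with hT
  have hkT : k ∈ T := by simp [hT, hkA]
  have hTne : T.Nonempty := ⟨k, hkT⟩
  have hstep1 : ∑ h ∈ Finset.Iic k, p ℓ (σ h) = ∑ h ∈ T, p ℓ (σ h) := by
    rw [hT]
    refine (Finset.sum_filter_of_ne ?_).symm
    intro h _ hne
    have : 0 < p ℓ (σ h) := lt_of_le_of_ne (hp ℓ (σ h)) (Ne.symm hne)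
    simp [hAdef, this]
  set istar : Fin A.card := T.sup' hTne F with hi
  have hFinjOn : Set.InjOn F ↑T := by
    intro a ha b hb hab
    have ha' : σ a ∈ A := (Finset.mem_filter.mp ha).2
    have hb' : σ b ∈ A := (Finset.mem_filter.mp hb).2
    apply hbij.injective
    rw [← hFspec a ha', ← hFspec b hb', hab]
  have hstep2 : ∑ h ∈ T, p ℓ (σ h) ≤ ∑ i ∈ Finset.Iic istar, p ℓ (τ i) := by
    have : ∑ h ∈ T, p ℓ (σ h) = ∑ i ∈ T.image F, p ℓ (τ i) := by
      rw [Finset.sum_image (fun a ha b hb => hFinjOn ha hb)]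
      refine Finset.sum_congr rfl (fun h hh => ?_)
      rw [hFspec h (Finset.mem_filter.mp hh).2]
    rw [this]
    refine Finset.sum_le_sum_of_subset_of_nonneg ?_ (fun i _ _ => hp ℓ (τ i))
    intro i hi
    obtain ⟨h, hh, rfl⟩ := Finset.mem_image.mp hi
    exact Finset.mem_Iic.mpr (Finset.le_sup' F hh)
  have hstep3 : D (τ istar) ≤ D (σ k) := by
    obtain ⟨h₀, hh₀, hEq⟩ := Finset.exists_mem_eq_sup' hTne F
    have hh₀' := Finset.mem_filter.mp hh₀
    have : τ istar = σ h₀ := by rw [hi, hEq]; exact hFspec h₀ hh₀'.2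
    rw [this]
    exact hmono (Finset.mem_Iic.mp hh₀'.1)
  calc ∑ h ∈ Finset.Iic k, p ℓ (σ h) = ∑ h ∈ T, p ℓ (σ h) := hstep1
    _ ≤ ∑ i ∈ Finset.Iic istar, p ℓ (τ i) := hstep2
    _ ≤ D (τ istar) := hτsum istar
    _ ≤ D (σ k) := hstep3
end

section
/- There exists a primal-feasible enumeration of C if and only if some enumeration τ of C ordered by nondecreasing deadlines, i.e., with D(τ 1) ≤ D(τ 2) ≤ … ≤ D(τ N), is primal-feasible. (Paper's Corollary after Theorem 5: the primal problem is feasible if and only if the schedule which sorts coflows in decreasing order of the weighted isolation rate R̃⁰_j — equivalently in nondecreasing order of the deadlines D_j = E / R̃⁰_j — is feasible.) -/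
/-!
Exchange argument for earliest-deadline-first. Let `σ` be primal-feasible and `τ = σ ∘ π` any
reordering with nondecreasing deadlines. Fix a position `k` of `τ` and a port `ℓ` used by `τ k`.
Among the coflows at positions `≤ k` of `τ` that use `ℓ`, take the one, `σ m`, that comes last
in `σ`. All of them lie in the `σ`-prefix ending at `m`, so their load on `ℓ` is at most that
prefix's load, which is at most `D (σ m)` by feasibility of `σ`, and `D (σ m) ≤ D (τ k)`
because `τ` is sorted. Hence every deadline-sorted enumeration is feasible as soon as one
enumeration is, and sorting any enumeration gives one.
-/

open Finset

section

variable {L C ι : Type*} [LinearOrder ι] [LocallyFiniteOrderBot ι]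

def PrimalFeasible (p : L → C → ℝ) (D : C → ℝ) (σ : ι → C) : Prop :=
  ∀ k : ι, ∀ ℓ : L, 0 < p ℓ (σ k) → ∑ h ∈ Iic k, p ℓ (σ h) ≤ D (σ k)

theorem PrimalFeasible.comp_of_monotone {p : L → C → ℝ} (hp : ∀ ℓ j, 0 ≤ p ℓ j) {D : C → ℝ}
    {σ : ι → C} (hσ : PrimalFeasible p D σ) {π : ι → ι} (hπ : Function.Injective π)
    (hmono : Monotone (D ∘ σ ∘ π)) : PrimalFeasible p D (σ ∘ π) := by
  classical
  intro k ℓ hk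
  set A := (Iic k).filter fun h => 0 < p ℓ (σ (π h))
  obtain ⟨last, hlast, hmax⟩ := A.exists_max_image π ⟨k, mem_filter.2 ⟨mem_Iic.2 le_rfl, hk⟩⟩
  rw [mem_filter, mem_Iic] at hlast
  have hsupp : ∀ h ∈ Iic k, h ∉ A → p ℓ (σ (π h)) = 0 := fun h hh hA =>
    le_antisymm (not_lt.1 fun hpos => hA (mem_filter.2 ⟨hh, hpos⟩)) (hp _ _)
  have hsub : A.image π ⊆ Iic (π last) := by
    simpa only [image_subset_iff, mem_Iic] using hmax
  calc ∑ h ∈ Iic k, p ℓ (σ (π h))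
      = ∑ h ∈ A, p ℓ (σ (π h)) := (sum_subset (filter_subset _ _) hsupp).symm
    _ = ∑ i ∈ A.image π, p ℓ (σ i) := (sum_image (f := fun i => p ℓ (σ i)) fun _ _ _ _ h => hπ h).symm
    _ ≤ ∑ i ∈ Iic (π last), p ℓ (σ i) :=
        sum_le_sum_of_subset_of_nonneg hsub fun _ _ _ => hp _ _
    _ ≤ D (σ (π last)) := hσ _ ℓ hlast.2
    _ ≤ D (σ (π k)) := hmono hlast.1

end

theorem primal_feasible_iff_EDD_feasible_general
    {L C : Type*}
    (N : ℕ)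
    (p : L → C → ℝ) (hp : ∀ ℓ j, 0 ≤ p ℓ j)
    (D : C → ℝ) :
    (∃ σ : Fin N → C, Function.Bijective σ ∧
        ∀ k : Fin N, ∀ ℓ : L, 0 < p ℓ (σ k) →
          ∑ h ∈ Finset.Iic k, p ℓ (σ h) ≤ D (σ k)) ↔
    (∃ τ : Fin N → C, Function.Bijective τ ∧
        (∀ i j : Fin N, i ≤ j → D (τ i) ≤ D (τ j)) ∧
        ∀ k : Fin N, ∀ ℓ : L, 0 < p ℓ (τ k) →
          ∑ h ∈ Finset.Iic k, p ℓ (τ h) ≤ D (τ k)) := by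
  constructor
  · rintro ⟨σ, hσ, hfeas⟩
    let π := Tuple.sort (D ∘ σ)
    exact ⟨σ ∘ π, hσ.comp π.bijective, fun i j hij => Tuple.monotone_sort (D ∘ σ) hij,
      PrimalFeasible.comp_of_monotone hp hfeas π.injective (Tuple.monotone_sort (D ∘ σ))⟩
  · rintro ⟨τ, hτ, -, hfeas⟩
    exact ⟨τ, hτ, hfeas⟩

/-- Paper's Corollary after Theorem 5: a primal-feasible enumeration of the
coflows exists if and only if some enumeration sorted in nondecreasing order of
the deadlines is primal-feasible. -/
theorem primal_feasible_iff_EDD_feasible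
    {L C : Type*} [Fintype L] [Nonempty L] [Fintype C] [Nonempty C]
    (N : ℕ) (hN : Fintype.card C = N)
    (p : L → C → ℝ) (hp : ∀ ℓ j, 0 ≤ p ℓ j)
    (D : C → ℝ) (hD : ∀ j, 0 < D j) :
    (∃ σ : Fin N → C, Function.Bijective σ ∧
        ∀ k : Fin N, ∀ ℓ : L, 0 < p ℓ (σ k) →
          ∑ h ∈ Finset.Iic k, p ℓ (σ h) ≤ D (σ k)) ↔
    (∃ τ : Fin N → C, Function.Bijective τ ∧
        (∀ i j : Fin N, i ≤ j → D (τ i) ≤ D (τ j)) ∧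
        ∀ k : Fin N, ∀ ℓ : L, 0 < p ℓ (τ k) →
          ∑ h ∈ Finset.Iic k, p ℓ (τ h) ≤ D (τ k)) :=
  primal_feasible_iff_EDD_feasible_general N p hp D
end

section
/- For every enumeration σ of C and every enumeration τ of C with a(τ 1) ≥ a(τ 2) ≥ … ≥ a(τ N), one has g(σ) ≥ g(τ); that is, the minimum over all enumerations of the maximum weighted prefix load g is attained at any enumeration sorting the weights a in nonincreasing order. (Paper's Theorem 5: the MPS algorithm, which sorts coflows by decreasing R̃⁰_j and takes the maximum over all ports of the weighted per-port prefix volumes, returns the minimum primal slowdown E^p.) -/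
/-- The slowdown value `g(σ)` of an enumeration `σ`: the maximum, over all
pairs `(ℓ, k)` with `p ℓ (σ k) > 0`, of `a (σ k) · ∑_{h ≤ k} p ℓ (σ h)`,
and `0` if no such pair exists. -/
noncomputable def slowdownVal {L C : Type*} [Fintype L] [Fintype C] {N : ℕ}
    (p : L → C → ℝ) (a : C → ℝ) (σ : Fin N → C) : ℝ :=
  ((Finset.univ ×ˢ Finset.univ : Finset (L × Fin N)).filter
      (fun x => 0 < p x.1 (σ x.2))).fold max 0
    (fun x => a (σ x.2) * ∑ h ∈ Finset.Iic x.2, p x.1 (σ h))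

/-- Paper's Theorem 5 (correctness of MPS): the minimum over all enumerations
of the maximum weighted prefix load `g` is attained at any enumeration sorting
the weights `a` (the weighted isolation rates) in nonincreasing order. -/
theorem MPS_returns_min_primal_slowdown
    {L C : Type*} [Fintype L] [Nonempty L] [Fintype C] [Nonempty C]
    (N : ℕ) (hN : Fintype.card C = N)
    (p : L → C → ℝ) (hp : ∀ ℓ j, 0 ≤ p ℓ j)
    (a : C → ℝ) (ha : ∀ j, 0 < a j)
    (σ τ : Fin N → C)
    (hσ : Function.Bijective σ) (hτ : Function.Bijective τ)
    (hsort : ∀ i j : Fin N, i ≤ j → a (τ j) ≤ a (τ i)) :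
    slowdownVal p a τ ≤ slowdownVal p a σ := by
  have h0σ : (0:ℝ) ≤ slowdownVal p a σ := by
    rw [slowdownVal, Finset.le_fold_max]; exact Or.inl le_rfl
  rw [slowdownVal, Finset.fold_max_le]
  refine ⟨h0σ, ?_⟩
  rintro ⟨ℓ, k⟩ hx
  rw [Finset.mem_filter] at hx
  have hpk : 0 < p ℓ (τ k) := hx.2
  set e := Equiv.ofBijective σ hσ with he
  set T := (Finset.Iic k).filter (fun h => 0 < p ℓ (τ h)) with hT
  have hkT : k ∈ T := by simp [hT, hpk]
  have hTne : (T.image (fun h => e.symm (τ h))).Nonempty :=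
    ⟨_, Finset.mem_image_of_mem _ hkT⟩
  set k' := (T.image (fun h => e.symm (τ h))).max' hTne with hk'
  obtain ⟨h0, hh0T, hfh0⟩ :=
    Finset.mem_image.mp ((T.image (fun h => e.symm (τ h))).max'_mem hTne)
  rw [hT, Finset.mem_filter, Finset.mem_Iic] at hh0T
  have hσk' : σ k' = τ h0 := by
    rw [hk', ← hfh0]
    exact Equiv.ofBijective_apply_symm_apply σ hσ (τ h0)
  have hpk' : 0 < p ℓ (σ k') := by rw [hσk']; exact hh0T.2
  have hale : a (τ k) ≤ a (σ k') := by rw [hσk']; exact hsort _ _ hh0T.1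
  have hinj : ∀ x ∈ T, ∀ y ∈ T, e.symm (τ x) = e.symm (τ y) → x = y := by
    intro x _ y _ hxy
    exact hτ.1 (e.symm.injective hxy)
  have hsum1 : ∑ h ∈ Finset.Iic k, p ℓ (τ h) = ∑ h ∈ T, p ℓ (τ h) := by
    rw [hT]
    refine (Finset.sum_filter_of_ne ?_).symm
    intro x _ hne
    exact lt_of_le_of_ne (hp ℓ (τ x)) (Ne.symm hne)
  have hsum2 : ∑ h ∈ T, p ℓ (τ h)
      = ∑ m ∈ T.image (fun h => e.symm (τ h)), p ℓ (σ m) := by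
    rw [Finset.sum_image hinj]
    refine Finset.sum_congr rfl ?_
    intro h _
    rw [Equiv.ofBijective_apply_symm_apply σ hσ (τ h)]
  have hsub : T.image (fun h => e.symm (τ h)) ⊆ Finset.Iic k' := by
    intro m hm
    rw [Finset.mem_Iic]
    exact Finset.le_max' _ m hm
  have hsum3 : ∑ h ∈ Finset.Iic k, p ℓ (τ h) ≤ ∑ h ∈ Finset.Iic k', p ℓ (σ h) := by
    rw [hsum1, hsum2]
    exact Finset.sum_le_sum_of_subset_of_nonneg hsub (fun i _ _ => hp ℓ (σ i))
  have hsnn : 0 ≤ ∑ h ∈ Finset.Iic k, p ℓ (τ h) :=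
    Finset.sum_nonneg (fun i _ => hp ℓ (τ i))
  have hval : a (τ k) * ∑ h ∈ Finset.Iic k, p ℓ (τ h)
      ≤ a (σ k') * ∑ h ∈ Finset.Iic k', p ℓ (σ h) :=
    mul_le_mul hale hsum3 hsnn (le_of_lt (ha (σ k')))
  rw [slowdownVal, Finset.le_fold_max]
  right
  refine ⟨(ℓ, k'), ?_, hval⟩
  rw [Finset.mem_filter]
  exact ⟨Finset.mem_product.mpr ⟨Finset.mem_univ _, Finset.mem_univ _⟩, hpk'⟩
end

section
/- If there exists a primal-feasible enumeration of C, then for every nonempty subset A ⊆ C the set of feasible tail coflows F(A) is nonempty; that is, there exists j ∈ A such that for every port ℓ with p ℓ j > 0, the total volume ∑_{k∈A} p ℓ k of A on port ℓ is at most D j. (Paper's Lemma 1: if the primal problem is feasible, then at every iteration k of the COFAIR algorithm the set F_k of feasible tail coflows of the unscheduled set A_k is nonempty.) -/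
/-- Paper's Lemma 1: if a primal-feasible enumeration exists, then every
nonempty subset `A` of coflows admits a feasible tail coflow, i.e. some
`j ∈ A` such that on every port `ℓ` where `j` is active, the total volume of
`A` on `ℓ` is at most the deadline `D j`. -/
theorem feasible_tail_coflow_exists
    {L C : Type*} [Fintype L] [Nonempty L] [Fintype C] [Nonempty C]
    (N : ℕ) (hN : Fintype.card C = N)
    (p : L → C → ℝ) (hp : ∀ ℓ j, 0 ≤ p ℓ j)
    (D : C → ℝ) (hD : ∀ j, 0 < D j)
    (hfeas : ∃ σ : Fin N → C, Function.Bijective σ ∧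
        ∀ k : Fin N, ∀ ℓ : L, 0 < p ℓ (σ k) →
          ∑ h ∈ Finset.Iic k, p ℓ (σ h) ≤ D (σ k)) :
    ∀ A : Finset C, A.Nonempty →
      ∃ j ∈ A, ∀ ℓ : L, 0 < p ℓ j → ∑ k ∈ A, p ℓ k ≤ D j := by
  classical
  rintro A ⟨a, ha⟩
  obtain ⟨σ, ⟨hinj, hsurj⟩, hσ⟩ := hfeas
  -- indices whose image lies in A
  set S : Finset (Fin N) := Finset.univ.filter (fun h => σ h ∈ A) with hS
  have hSne : S.Nonempty := by
    obtain ⟨i, hi⟩ := hsurj a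
    exact ⟨i, by simp [hS, hi, ha]⟩
  obtain ⟨k, hkS, hkmax⟩ := S.exists_max_image id hSne
  have hkA : σ k ∈ A := by simpa [hS] using hkS
  refine ⟨σ k, hkA, fun ℓ hpos => ?_⟩
  have hsum : ∑ j ∈ A, p ℓ j = ∑ h ∈ S, p ℓ (σ h) := by
    refine (Finset.sum_bij' (fun h _ => σ h) (fun j hj => (hsurj j).choose) ?_ ?_ ?_ ?_ ?_).symm
    · intro h hh; simpa [hS] using hh
    · intro j hj
      simp only [hS, Finset.mem_filter, Finset.mem_univ, true_and]
      rw [(hsurj j).choose_spec]; exact hj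
    · intro h hh; exact hinj ((hsurj (σ h)).choose_spec)
    · intro j hj; exact (hsurj j).choose_spec
    · intro h hh; rfl
  have hsub : S ⊆ Finset.Iic k := fun h hh =>
    Finset.mem_Iic.mpr (hkmax h hh)
  calc ∑ j ∈ A, p ℓ j = ∑ h ∈ S, p ℓ (σ h) := hsum
    _ ≤ ∑ h ∈ Finset.Iic k, p ℓ (σ h) :=
        Finset.sum_le_sum_of_subset_of_nonneg hsub (fun i _ _ => hp ℓ (σ i))
    _ ≤ D (σ k) := hσ k ℓ hpos
end

section
/- Let C̄ : C → ℝ be completion times of a capacity-feasible schedule meeting the deadlines: there is an enumeration π of C with C̄(π 1) ≤ C̄(π 2) ≤ … ≤ C̄(π N) such that for every port ℓ and every index k, ∑_{h ≤ k} p ℓ (π h) ≤ C̄(π k), and C̄ j ≤ D j for every coflow j. Then C̄ satisfies all the parallel inequalities: for every port ℓ and every subset A ⊆ C, ∑_{j∈A} p ℓ j · C̄ j ≥ f ℓ A. In particular the primal LP (parallel inequalities together with the deadline constraints C j ≤ D j) is feasible. (Paper's Theorem 4: if the slowdown-constrained scheduling problem PS is feasible, then the primal LP is feasible.) -/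
/-- The parallel-inequality right-hand side
`f ℓ A = (1/2)·((∑_{j∈A} p ℓ j)² + ∑_{j∈A} (p ℓ j)²)`. -/
noncomputable def parallelRHS {L C : Type*} (p : L → C → ℝ) (ℓ : L) (A : Finset C) : ℝ :=
  (1 / 2) * ((∑ j ∈ A, p ℓ j) ^ 2 + ∑ j ∈ A, (p ℓ j) ^ 2)

lemma key_sum_identity {C : Type*} [DecidableEq C] (r : C → ℕ) (g : C → ℝ) (A : Finset C)
    (hr : ∀ i ∈ A, ∀ j ∈ A, r i = r j → i = j) :
    ∑ j ∈ A, (∑ i ∈ A.filter (fun i => r i ≤ r j), g i) * g j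
      = (1 / 2) * ((∑ j ∈ A, g j) ^ 2 + ∑ j ∈ A, (g j) ^ 2) := by
  set T := ∑ j ∈ A, (∑ i ∈ A.filter (fun i => r i ≤ r j), g i) * g j with hTdef
  have hT : T = ∑ j ∈ A, ∑ i ∈ A, if r i ≤ r j then g i * g j else 0 := by
    rw [hTdef]
    refine Finset.sum_congr rfl fun j _ => ?_
    rw [Finset.sum_filter, Finset.sum_mul]
    exact Finset.sum_congr rfl fun i _ => by split <;> simp
  have hswap : T = ∑ j ∈ A, ∑ i ∈ A, if r j ≤ r i then g i * g j else 0 := by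
    rw [hT, Finset.sum_comm]
    exact Finset.sum_congr rfl fun a _ => Finset.sum_congr rfl fun b _ => by rw [mul_comm]
  have h2 : 2 * T = (∑ j ∈ A, g j) ^ 2 + ∑ j ∈ A, (g j) ^ 2 := by
    have : 2 * T = ∑ j ∈ A, ∑ i ∈ A,
        ((if r i ≤ r j then g i * g j else 0) + (if r j ≤ r i then g i * g j else 0)) := by
      rw [two_mul]
      nth_rewrite 2 [hswap]
      nth_rewrite 1 [hT]
      rw [← Finset.sum_add_distrib]
      exact Finset.sum_congr rfl fun j _ => by rw [← Finset.sum_add_distrib]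
    rw [this]
    have hpt : ∀ j ∈ A, ∀ i ∈ A,
        ((if r i ≤ r j then g i * g j else 0) + (if r j ≤ r i then g i * g j else 0))
          = g i * g j + (if i = j then g i * g j else 0) := by
      intro j hj i hi
      by_cases hij : i = j
      · subst hij; simp
      · have hne : r i ≠ r j := fun h => hij (hr i hi j hj h)
        rcases le_total (r i) (r j) with h | h
        · have h' : ¬ r j ≤ r i := fun h'' => hne (le_antisymm h h'')
          simp [h, h', hij]
        · have h' : ¬ r i ≤ r j := fun h'' => hne (le_antisymm h'' h)
          simp [h, h', hij]
    calc ∑ j ∈ A, ∑ i ∈ A,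
        ((if r i ≤ r j then g i * g j else 0) + (if r j ≤ r i then g i * g j else 0))
        = ∑ j ∈ A, ∑ i ∈ A, (g i * g j + if i = j then g i * g j else 0) := by
          exact Finset.sum_congr rfl fun j hj => Finset.sum_congr rfl fun i hi => hpt j hj i hi
      _ = ∑ j ∈ A, ((∑ i ∈ A, g i) * g j + g j * g j) := by
          refine Finset.sum_congr rfl fun j hj => ?_
          rw [Finset.sum_add_distrib, Finset.sum_mul]
          congr 1
          simp [Finset.sum_ite_eq' A j (fun i => g i * g j), hj]
      _ = (∑ j ∈ A, g j) ^ 2 + ∑ j ∈ A, (g j) ^ 2 := by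
          rw [Finset.sum_add_distrib, ← Finset.mul_sum, sq]
          congr 1
          exact Finset.sum_congr rfl fun j _ => (sq (g j)).symm
  linarith

/-- Paper's Theorem 4: completion times of a capacity-feasible schedule which
meets the deadlines satisfy all the parallel inequalities; in particular the
primal LP (parallel inequalities together with the deadline constraints) is
feasible. -/
theorem PS_feasible_implies_primal_LP_feasible
    {L C : Type*} [Fintype L] [Nonempty L] [Fintype C] [Nonempty C]
    (N : ℕ) (hN : Fintype.card C = N)
    (p : L → C → ℝ) (hp : ∀ ℓ j, 0 ≤ p ℓ j)
    (D : C → ℝ) (hD : ∀ j, 0 < D j)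
    (Cbar : C → ℝ)
    (hsched : ∃ π : Fin N → C, Function.Bijective π ∧
        (∀ i j : Fin N, i ≤ j → Cbar (π i) ≤ Cbar (π j)) ∧
        (∀ ℓ : L, ∀ k : Fin N, ∑ h ∈ Finset.Iic k, p ℓ (π h) ≤ Cbar (π k)))
    (hdl : ∀ j : C, Cbar j ≤ D j) :
    (∀ ℓ : L, ∀ A : Finset C, ∑ j ∈ A, p ℓ j * Cbar j ≥ parallelRHS p ℓ A) ∧
    (∃ Cv : C → ℝ,
        (∀ ℓ : L, ∀ A : Finset C, ∑ j ∈ A, p ℓ j * Cv j ≥ parallelRHS p ℓ A) ∧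
        (∀ j : C, Cv j ≤ D j)) := by
  classical
  obtain ⟨π, hbij, hmono, hcap⟩ := hsched
  set e : Fin N ≃ C := Equiv.ofBijective π hbij with he
  have heπ : ∀ h : Fin N, e h = π h := fun h => rfl
  set r : C → ℕ := fun j => (e.symm j : ℕ) with hrdef
  have hrinj : ∀ i j : C, r i = r j → i = j := by
    intro i j h
    have : e.symm i = e.symm j := Fin.ext h
    exact e.symm.injective this
  have main : ∀ ℓ : L, ∀ A : Finset C, ∑ j ∈ A, p ℓ j * Cbar j ≥ parallelRHS p ℓ A := by
    intro ℓ A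
    -- for each j, Cbar j dominates the restricted prefix sum
    have hbound : ∀ j ∈ A, ∑ i ∈ A.filter (fun i => r i ≤ r j), p ℓ i ≤ Cbar j := by
      intro j _
      have hmap : ∑ i ∈ A.filter (fun i => r i ≤ r j), p ℓ i
          = ∑ h ∈ (Finset.Iic (e.symm j)).filter (fun h => π h ∈ A), p ℓ (π h) := by
        refine Finset.sum_nbij' (fun i => e.symm i) (fun h => π h) ?_ ?_ ?_ ?_ ?_
        · intro i hi
          simp only [Finset.mem_filter, Finset.mem_Iic] at hi ⊢
          constructor
          · exact Fin.le_def.mpr hi.2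
          · rw [← heπ, e.apply_symm_apply]; exact hi.1
        · intro h hh
          simp only [Finset.mem_filter, Finset.mem_Iic] at hh ⊢
          refine ⟨hh.2, ?_⟩
          rw [hrdef]
          simp only [← heπ, e.symm_apply_apply]
          exact Fin.le_def.mp hh.1
        · intro i _; exact e.apply_symm_apply i
        · intro h _; exact e.symm_apply_apply h
        · intro i _; exact congrArg (p ℓ) (e.apply_symm_apply i).symm
      rw [hmap]
      calc ∑ h ∈ (Finset.Iic (e.symm j)).filter (fun h => π h ∈ A), p ℓ (π h)
          ≤ ∑ h ∈ Finset.Iic (e.symm j), p ℓ (π h) :=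
            Finset.sum_le_sum_of_subset_of_nonneg (Finset.filter_subset _ _)
              (fun h _ _ => hp ℓ (π h))
        _ ≤ Cbar (π (e.symm j)) := hcap ℓ (e.symm j)
        _ = Cbar j := by rw [← heπ, e.apply_symm_apply]
    have step1 : ∑ j ∈ A, (∑ i ∈ A.filter (fun i => r i ≤ r j), p ℓ i) * p ℓ j
        ≤ ∑ j ∈ A, p ℓ j * Cbar j := by
      refine Finset.sum_le_sum fun j hj => ?_
      rw [mul_comm]
      exact mul_le_mul_of_nonneg_left (hbound j hj) (hp ℓ j)
    have hkey := key_sum_identity r (fun i => p ℓ i) A (fun i _ j _ h => hrinj i j h)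
    rw [hkey] at step1
    unfold parallelRHS
    exact step1
  exact ⟨main, Cbar, main, hdl⟩
end

section
/- Fix isolation completion times C⁰ : C → ℝ with C⁰ j > 0 and weights φ : C → ℝ with φ j > 0, and for E > 0 define deadlines D_E j = E · C⁰ j / φ j. If for some E > 0 there exist completion times C̄ : C → ℝ and an enumeration π of C with C̄(π 1) ≤ … ≤ C̄(π N), ∑_{h ≤ k} p ℓ (π h) ≤ C̄(π k) for every port ℓ and index k, and C̄ j ≤ D_E j for all j (a capacity-feasible schedule meeting slowdown E), then there exists a primal-feasible enumeration of C for the deadlines D_E. Consequently, the infimum of the set of E > 0 for which a primal-feasible enumeration exists is at most the infimum of the set of E > 0 for which such a capacity-feasible schedule exists, i.e., E^p ≤ E^*. (Paper's Corollary to Theorem 4.) -/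
/-- Paper's Corollary to Theorem 4 (`E^p ≤ E^*`): with deadlines
`D_E j = E · C⁰ j / φ j`, the existence for some `E > 0` of a capacity-feasible
schedule meeting slowdown `E` implies the existence of a primal-feasible
enumeration for the deadlines `D_E`; consequently, the infimum of the slowdowns
for which a primal-feasible enumeration exists is at most the infimum of the
slowdowns for which such a capacity-feasible schedule exists. -/
theorem min_primal_slowdown_le_min_slowdown
    {L C : Type*} [Fintype L] [Nonempty L] [Fintype C] [Nonempty C]
    (N : ℕ) (hN : Fintype.card C = N)
    (p : L → C → ℝ) (hp : ∀ ℓ j, 0 ≤ p ℓ j)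
    (C0 : C → ℝ) (hC0 : ∀ j, 0 < C0 j)
    (φ : C → ℝ) (hφ : ∀ j, 0 < φ j) :
    (∀ E : ℝ, 0 < E →
      (∃ (Cbar : C → ℝ) (π : Fin N → C), Function.Bijective π ∧
          (∀ i j : Fin N, i ≤ j → Cbar (π i) ≤ Cbar (π j)) ∧
          (∀ ℓ : L, ∀ k : Fin N, ∑ h ∈ Finset.Iic k, p ℓ (π h) ≤ Cbar (π k)) ∧
          (∀ j : C, Cbar j ≤ E * C0 j / φ j)) →
      ∃ σ : Fin N → C, Function.Bijective σ ∧
        ∀ k : Fin N, ∀ ℓ : L, 0 < p ℓ (σ k) →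
          ∑ h ∈ Finset.Iic k, p ℓ (σ h) ≤ E * C0 (σ k) / φ (σ k)) ∧
    ({E : ℝ | 0 < E ∧
        ∃ (Cbar : C → ℝ) (π : Fin N → C), Function.Bijective π ∧
          (∀ i j : Fin N, i ≤ j → Cbar (π i) ≤ Cbar (π j)) ∧
          (∀ ℓ : L, ∀ k : Fin N, ∑ h ∈ Finset.Iic k, p ℓ (π h) ≤ Cbar (π k)) ∧
          (∀ j : C, Cbar j ≤ E * C0 j / φ j)}.Nonempty →
      sInf {E : ℝ | 0 < E ∧
          ∃ σ : Fin N → C, Function.Bijective σ ∧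
            ∀ k : Fin N, ∀ ℓ : L, 0 < p ℓ (σ k) →
              ∑ h ∈ Finset.Iic k, p ℓ (σ h) ≤ E * C0 (σ k) / φ (σ k)} ≤
      sInf {E : ℝ | 0 < E ∧
          ∃ (Cbar : C → ℝ) (π : Fin N → C), Function.Bijective π ∧
            (∀ i j : Fin N, i ≤ j → Cbar (π i) ≤ Cbar (π j)) ∧
            (∀ ℓ : L, ∀ k : Fin N, ∑ h ∈ Finset.Iic k, p ℓ (π h) ≤ Cbar (π k)) ∧
            (∀ j : C, Cbar j ≤ E * C0 j / φ j)}) := by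
  constructor
  · rintro E hE ⟨Cbar, π, hbij, hmono, hcap, hdead⟩
    exact ⟨π, hbij, fun k ℓ _ => (hcap ℓ k).trans (hdead (π k))⟩
  · intro hne
    apply csInf_le_csInf
    · exact ⟨0, fun x hx => hx.1.le⟩
    · exact hne
    · rintro E ⟨hE, Cbar, π, hbij, hmono, hcap, hdead⟩
      exact ⟨hE, π, hbij, fun k ℓ _ => (hcap ℓ k).trans (hdead (π k))⟩
end

section
/- Assume a primal-feasible enumeration of C exists and every coflow has positive volume on at least one port. Then for any weights w : C → ℝ with w j ≥ 0 and multipliers α : C → ℝ with α j ≥ 0, there exist: a primal-feasible enumeration σ of C, ports μ : Fin N → L with p (μ k) (σ k) > 0 and σ k ∈ F(A_k) for every k (where A_k = {σ 1, …, σ k}), and dual values θ : Fin N → ℝ with θ k ≥ 0, such that the dual constraints hold with equality: for every m : Fin N, ∑_{k ≥ m, σ m ∈ F(A_k)} θ k · p (μ k) (σ m) = w (σ m) + α (σ m). (Paper's Theorem 7, correctness of the COFAIR algorithm: if the primal LP is feasible, COFAIR produces a primal-feasible σ-order together with a nonnegative feasible solution of the dual LP.) -/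
open Classical in
/-- The set `F(A)` of feasible tail coflows of a set `A` of coflows:
those `j ∈ A` such that on every port `ℓ` where `j` is active, the total
volume of `A` on `ℓ` fits within the deadline `D j`. -/
noncomputable def tailFeasible {L C : Type*} [Fintype L] [Fintype C]
    (p : L → C → ℝ) (D : C → ℝ) (A : Finset C) : Finset C :=
  A.filter (fun j => ∀ ℓ : L, 0 < p ℓ j → ∑ k ∈ A, p ℓ k ≤ D j)

lemma Iic_castSucc' {n : ℕ} (i : Fin n) :
    Finset.Iic (Fin.castSucc i) = (Finset.Iic i).map Fin.castSuccEmb := by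
  ext a
  simp only [Finset.mem_Iic, Finset.mem_map, Fin.castSuccEmb, Function.Embedding.coeFn_mk,
    Fin.le_def, Fin.coe_castSucc]
  constructor
  · intro h
    exact ⟨⟨a.val, by omega⟩, by simpa using h, by ext; simp [Fin.castSucc]⟩
  · rintro ⟨b, hb, rfl⟩; simpa using hb

lemma tailFeasible_nonempty {L C : Type*} [Fintype L] [Fintype C] [DecidableEq C]
    {N : ℕ} (p : L → C → ℝ) (hp : ∀ ℓ j, 0 ≤ p ℓ j) (D : C → ℝ)
    (σ0 : Fin N → C) (hbij : Function.Bijective σ0)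
    (hfe : ∀ k : Fin N, ∀ ℓ : L, 0 < p ℓ (σ0 k) →
        ∑ h ∈ Finset.Iic k, p ℓ (σ0 h) ≤ D (σ0 k))
    (B : Finset C) (hB : B.Nonempty) : (tailFeasible p D B).Nonempty := by
  classical
  set e := Equiv.ofBijective σ0 hbij with he
  obtain ⟨b, hbB, hmax⟩ := B.exists_max_image (fun c => e.symm c) hB
  refine ⟨b, ?_⟩
  rw [tailFeasible, Finset.mem_filter]
  refine ⟨hbB, fun ℓ hℓ => ?_⟩
  have hsub : B ⊆ (Finset.Iic (e.symm b)).image σ0 := by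
    intro c hc
    refine Finset.mem_image.mpr ⟨e.symm c, Finset.mem_Iic.mpr (hmax c hc), ?_⟩
    exact e.apply_symm_apply c
  have h1 : ∑ k ∈ B, p ℓ k ≤ ∑ k ∈ (Finset.Iic (e.symm b)).image σ0, p ℓ k :=
    Finset.sum_le_sum_of_subset_of_nonneg hsub (fun c _ _ => hp ℓ c)
  have h2 : ∑ k ∈ (Finset.Iic (e.symm b)).image σ0, p ℓ k
      = ∑ h ∈ Finset.Iic (e.symm b), p ℓ (σ0 h) :=
    Finset.sum_image (fun x _ y _ hxy => hbij.1 hxy)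
  have h3 := hfe (e.symm b) ℓ (by rwa [show σ0 (e.symm b) = b from e.apply_symm_apply b])
  rw [show σ0 (e.symm b) = b from e.apply_symm_apply b] at h3
  linarith

lemma mainInd {L C : Type*} [Fintype L] [Fintype C] [DecidableEq C]
    (p : L → C → ℝ) (hp : ∀ ℓ j, 0 ≤ p ℓ j) (D : C → ℝ)
    (hactive : ∀ j : C, ∃ ℓ : L, 0 < p ℓ j)
    (hF : ∀ B : Finset C, B.Nonempty → (tailFeasible p D B).Nonempty) :
    ∀ (n : ℕ) (A : Finset C), A.card = n → ∀ r : C → ℝ, (∀ j ∈ A, 0 ≤ r j) →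
    ∃ (σ : Fin n → C) (μ : Fin n → L) (θ : Fin n → ℝ),
      Function.Injective σ ∧ Finset.univ.image σ = A ∧
      (∀ k, 0 < p (μ k) (σ k)) ∧
      (∀ k, σ k ∈ tailFeasible p D ((Finset.Iic k).image σ)) ∧
      (∀ k, 0 ≤ θ k) ∧
      (∀ m, ∑ k ∈ Finset.univ.filter
          (fun k => m ≤ k ∧ σ m ∈ tailFeasible p D ((Finset.Iic k).image σ)),
        θ k * p (μ k) (σ m) = r (σ m)) := by
  classical
  intro n
  induction n with
  | zero =>
    intro A hA r hr
    refine ⟨Fin.elim0, Fin.elim0, Fin.elim0, fun a => a.elim0, ?_, fun k => k.elim0,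
      fun k => k.elim0, fun k => k.elim0, fun m => m.elim0⟩
    simp [Finset.card_eq_zero.mp hA]
  | succ n ih =>
    intro A hA r hr
    have hAne : A.Nonempty := Finset.card_pos.mp (by omega)
    obtain ⟨j0, hj0⟩ := hF A hAne
    obtain ⟨ℓ0, hℓ0⟩ := hactive j0
    set S : Finset C := (tailFeasible p D A).filter (fun j => 0 < p ℓ0 j) with hS
    have hSne : S.Nonempty := ⟨j0, Finset.mem_filter.mpr ⟨hj0, hℓ0⟩⟩
    obtain ⟨j1, hj1S, hmin⟩ := S.exists_min_image (fun j => r j / p ℓ0 j) hSne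
    have hj1F : j1 ∈ tailFeasible p D A := (Finset.mem_filter.mp hj1S).1
    have hj1A : j1 ∈ A := Finset.mem_of_mem_filter _ hj1F
    have hpj1 : 0 < p ℓ0 j1 := (Finset.mem_filter.mp hj1S).2
    set θtop : ℝ := r j1 / p ℓ0 j1 with hθtop
    have hθnn : 0 ≤ θtop := div_nonneg (hr j1 hj1A) (le_of_lt hpj1)
    set r' : C → ℝ := fun j => r j - (if j ∈ tailFeasible p D A then θtop * p ℓ0 j else 0)
      with hr'def
    have hr' : ∀ j ∈ A.erase j1, 0 ≤ r' j := by
      intro j hj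
      have hjA := Finset.mem_of_mem_erase hj
      simp only [hr'def]
      split_ifs with hjF
      · rcases lt_or_eq_of_le (hp ℓ0 j) with hpos | hzero
        · have hjS : j ∈ S := Finset.mem_filter.mpr ⟨hjF, hpos⟩
          have h1 : θtop ≤ r j / p ℓ0 j := hmin j hjS
          have h2 := (le_div_iff₀ hpos).mp h1
          linarith
        · rw [← hzero]; simpa using hr j hjA
      · simpa using hr j hjA
    have hcard : (A.erase j1).card = n := by
      rw [Finset.card_erase_of_mem hj1A, hA]
      omega
    obtain ⟨σ', μ', θ', hinj', himg', hμ', hTF', hθ', hdual'⟩ :=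
      ih (A.erase j1) hcard r' hr'
    set σ : Fin (n+1) → C := Fin.snoc σ' j1 with hσdef
    set μ : Fin (n+1) → L := Fin.snoc μ' ℓ0 with hμdef
    set θ : Fin (n+1) → ℝ := Fin.snoc θ' θtop with hθdef
    have hrange' : ∀ i : Fin n, σ' i ∈ A.erase j1 := by
      intro i; rw [← himg']; exact Finset.mem_image_of_mem σ' (Finset.mem_univ i)
    have himgIic : ∀ i : Fin n,
        (Finset.Iic (Fin.castSucc i)).image σ = (Finset.Iic i).image σ' := by
      intro i
      rw [Iic_castSucc', Finset.map_eq_image, Finset.image_image]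
      congr 1
      ext x
      simp [hσdef]
    have himgtop : (Finset.Iic (Fin.last n)).image σ = A := by
      have h0 : Finset.Iic (Fin.last n) = Finset.univ := by
        ext a; simp [Fin.le_last]
      rw [h0]
      have : (Finset.univ : Finset (Fin (n+1))).image σ
          = insert j1 (Finset.univ.image σ') := by
        ext c
        simp only [Finset.mem_image, Finset.mem_insert, Finset.mem_univ, true_and]
        constructor
        · rintro ⟨a, rfl⟩
          rcases Fin.eq_castSucc_or_eq_last a with ⟨a', rfl⟩ | rfl
          · exact Or.inr ⟨a', by simp [hσdef]⟩
          · exact Or.inl (by simp [hσdef])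
        · rintro (rfl | ⟨a, rfl⟩)
          · exact ⟨Fin.last n, by simp [hσdef]⟩
          · exact ⟨Fin.castSucc a, by simp [hσdef]⟩
      rw [this, himg', Finset.insert_erase hj1A]
    have hinj : Function.Injective σ := by
      intro a b hab
      rcases Fin.eq_castSucc_or_eq_last a with ⟨a', rfl⟩ | rfl <;>
        rcases Fin.eq_castSucc_or_eq_last b with ⟨b', rfl⟩ | rfl
      · simp only [hσdef, Fin.snoc_castSucc] at hab
        exact congrArg Fin.castSucc (hinj' hab)
      · simp only [hσdef, Fin.snoc_castSucc, Fin.snoc_last] at hab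
        exact absurd hab (Finset.ne_of_mem_erase (hrange' a'))
      · simp only [hσdef, Fin.snoc_castSucc, Fin.snoc_last] at hab
        exact absurd hab.symm (Finset.ne_of_mem_erase (hrange' b'))
      · rfl
    refine ⟨σ, μ, θ, hinj, ?_, ?_, ?_, ?_, ?_⟩
    · -- image univ = A
      have h0 : (Finset.univ : Finset (Fin (n+1))) = Finset.Iic (Fin.last n) := by
        ext a; simp [Fin.le_last]
      rw [h0, himgtop]
    · -- μ positive
      intro k
      rcases Fin.eq_castSucc_or_eq_last k with ⟨k', rfl⟩ | rfl
      · simpa [hσdef, hμdef] using hμ' k'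
      · simpa [hσdef, hμdef] using hpj1
    · -- tail feasible
      intro k
      rcases Fin.eq_castSucc_or_eq_last k with ⟨k', rfl⟩ | rfl
      · rw [himgIic k']
        simpa [hσdef] using hTF' k'
      · rw [himgtop]
        simpa [hσdef] using hj1F
    · -- θ nonneg
      intro k
      rcases Fin.eq_castSucc_or_eq_last k with ⟨k', rfl⟩ | rfl
      · simpa [hθdef] using hθ' k'
      · simpa [hθdef] using hθnn
    · -- dual equality
      intro m
      rw [Finset.sum_filter]
      rw [Fin.sum_univ_castSucc]
      rcases Fin.eq_castSucc_or_eq_last m with ⟨i, rfl⟩ | rfl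
      · -- m = castSucc i
        have hlast : (if Fin.castSucc i ≤ Fin.last n ∧
            σ (Fin.castSucc i) ∈ tailFeasible p D ((Finset.Iic (Fin.last n)).image σ) then
            θ (Fin.last n) * p (μ (Fin.last n)) (σ (Fin.castSucc i)) else 0)
            = (if σ' i ∈ tailFeasible p D A then θtop * p ℓ0 (σ' i) else 0) := by
          rw [himgtop]
          simp [hσdef, hμdef, hθdef, Fin.le_last]
        rw [hlast]
        have hcast : ∀ k' : Fin n,
            (if Fin.castSucc i ≤ Fin.castSucc k' ∧
              σ (Fin.castSucc i) ∈ tailFeasible p D ((Finset.Iic (Fin.castSucc k')).image σ) then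
              θ (Fin.castSucc k') * p (μ (Fin.castSucc k')) (σ (Fin.castSucc i)) else 0)
            = (if i ≤ k' ∧ σ' i ∈ tailFeasible p D ((Finset.Iic k').image σ') then
              θ' k' * p (μ' k') (σ' i) else 0) := by
          intro k'
          rw [himgIic k']
          simp [hσdef, hμdef, hθdef, Fin.castSucc_le_castSucc_iff]
        rw [Finset.sum_congr rfl (fun k' _ => hcast k')]
        have := hdual' i
        rw [Finset.sum_filter] at this
        rw [this]
        simp only [hr'def, hσdef, Fin.snoc_castSucc]
        ring
      · -- m = last
        have hzero : ∀ k' : Fin n,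
            (if Fin.last n ≤ Fin.castSucc k' ∧
              σ (Fin.last n) ∈ tailFeasible p D ((Finset.Iic (Fin.castSucc k')).image σ) then
              θ (Fin.castSucc k') * p (μ (Fin.castSucc k')) (σ (Fin.last n)) else 0) = 0 := by
          intro k'
          have : ¬ (Fin.last n ≤ Fin.castSucc k') := by
            simp only [Fin.le_def, Fin.val_last, Fin.coe_castSucc, not_le]
            omega
          simp [this]
        rw [Finset.sum_congr rfl (fun k' _ => hzero k'), Finset.sum_const_zero, zero_add]
        rw [himgtop]
        have hcond : σ (Fin.last n) ∈ tailFeasible p D A := by simpa [hσdef] using hj1F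
        simp only [hσdef, hμdef, hθdef, Fin.snoc_last]
        rw [if_pos ⟨le_refl _, by simpa [hσdef] using hcond⟩, hθtop,
          div_mul_cancel₀ _ (ne_of_gt hpj1)]

/-- Paper's Theorem 7 (correctness of COFAIR): if a primal-feasible enumeration
exists (and every coflow is active on some port), then for any nonnegative
weights `w` and multipliers `α` there are a primal-feasible enumeration `σ`,
pivot bottlenecks `μ k` with `σ k` a feasible tail coflow of the unscheduled
set `A_k = {σ 1, …, σ k}`, and nonnegative dual values `θ` satisfying the dual
constraints with equality. -/
theorem COFAIR_correctness
    {L C : Type*} [Fintype L] [Nonempty L] [Fintype C] [Nonempty C]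
    [DecidableEq C]
    (N : ℕ) (hN : Fintype.card C = N)
    (p : L → C → ℝ) (hp : ∀ ℓ j, 0 ≤ p ℓ j)
    (D : C → ℝ) (hD : ∀ j, 0 < D j)
    (hactive : ∀ j : C, ∃ ℓ : L, 0 < p ℓ j)
    (hfeas : ∃ σ : Fin N → C, Function.Bijective σ ∧
        ∀ k : Fin N, ∀ ℓ : L, 0 < p ℓ (σ k) →
          ∑ h ∈ Finset.Iic k, p ℓ (σ h) ≤ D (σ k))
    (w : C → ℝ) (hw : ∀ j, 0 ≤ w j)
    (α : C → ℝ) (hα : ∀ j, 0 ≤ α j) :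
    ∃ (σ : Fin N → C) (μ : Fin N → L) (θ : Fin N → ℝ),
      Function.Bijective σ ∧
      (∀ k : Fin N, ∀ ℓ : L, 0 < p ℓ (σ k) →
          ∑ h ∈ Finset.Iic k, p ℓ (σ h) ≤ D (σ k)) ∧
      (∀ k : Fin N, 0 < p (μ k) (σ k)) ∧
      (∀ k : Fin N, σ k ∈ tailFeasible p D ((Finset.Iic k).image σ)) ∧
      (∀ k : Fin N, 0 ≤ θ k) ∧
      (∀ m : Fin N,
        ∑ k ∈ Finset.univ.filter
            (fun k : Fin N => m ≤ k ∧ σ m ∈ tailFeasible p D ((Finset.Iic k).image σ)),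
          θ k * p (μ k) (σ m) = w (σ m) + α (σ m)) := by
  classical
  obtain ⟨σ0, hbij0, hfe0⟩ := hfeas
  have hF : ∀ B : Finset C, B.Nonempty → (tailFeasible p D B).Nonempty :=
    fun B hB => tailFeasible_nonempty p hp D σ0 hbij0 hfe0 B hB
  have hcard : (Finset.univ : Finset C).card = N := by
    rw [Finset.card_univ, hN]
  obtain ⟨σ, μ, θ, hinj, himg, hμ, hTF, hθ, hdual⟩ :=
    mainInd p hp D hactive hF N Finset.univ hcard (fun j => w j + α j)
      (fun j _ => add_nonneg (hw j) (hα j))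
  have hbij : Function.Bijective σ :=
    (Fintype.bijective_iff_injective_and_card σ).mpr ⟨hinj, by simp [hN]⟩
  refine ⟨σ, μ, θ, hbij, ?_, hμ, hTF, hθ, hdual⟩
  intro k ℓ hℓ
  have h1 := hTF k
  rw [tailFeasible, Finset.mem_filter] at h1
  have h2 := h1.2 ℓ hℓ
  have h3 : ∑ j ∈ (Finset.Iic k).image σ, p ℓ j = ∑ h ∈ Finset.Iic k, p ℓ (σ h) :=
    Finset.sum_image (fun x _ y _ hxy => hinj hxy)
  linarith
end

section
/- Let σ be an enumeration of C, μ : Fin N → L, θ : Fin N → ℝ with θ k ≥ 0, and finite sets F : Fin N → Finset C with F k ⊆ A_k := {σ 1, …, σ k}. Let w, α : C → ℝ with w j ≥ 0, α j ≥ 0 satisfy the dual equalities: for every m : Fin N, w(σ m) + α(σ m) = ∑_{k ≥ m, σ m ∈ F k} θ k · p (μ k) (σ m). Define completion times by CT(σ k) = ∑_{h ≤ k} p (μ k) (σ h) and assume CT(σ j) ≤ CT(σ k) whenever j ≤ k. Then ∑_{j ∈ C} (w j + α j) · CT j ≤ 2 · ∑_{k : Fin N} θ k · f (μ k) (A_k).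 (The core inequality chain established in the paper's proof of its approximation theorem, Theorem 8.) -/
/-- The core inequality chain in the paper's proof of its approximation theorem
(Theorem 8): if the dual equalities hold and the completion-time estimates
`CT (σ k) = ∑_{h ≤ k} p (μ k) (σ h)` are nondecreasing along `σ`, then
`∑_j (w j + α j)·CT j ≤ 2 ∑_k θ k · f (μ k) (A_k)`. -/
theorem COFAIR_core_inequality
    {L C : Type*} [Fintype L] [Nonempty L] [Fintype C] [Nonempty C]
    [DecidableEq C]
    (N : ℕ) (hN : Fintype.card C = N)
    (p : L → C → ℝ) (hp : ∀ ℓ j, 0 ≤ p ℓ j)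
    (σ : Fin N → C) (hσ : Function.Bijective σ)
    (μ : Fin N → L)
    (θ : Fin N → ℝ) (hθ : ∀ k, 0 ≤ θ k)
    (F : Fin N → Finset C) (hF : ∀ k : Fin N, F k ⊆ (Finset.Iic k).image σ)
    (w : C → ℝ) (hw : ∀ j, 0 ≤ w j)
    (α : C → ℝ) (hα : ∀ j, 0 ≤ α j)
    (hdual : ∀ m : Fin N,
        w (σ m) + α (σ m) =
          ∑ k ∈ Finset.univ.filter (fun k : Fin N => m ≤ k ∧ σ m ∈ F k),
            θ k * p (μ k) (σ m))
    (CT : C → ℝ)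
    (hCT : ∀ k : Fin N, CT (σ k) = ∑ h ∈ Finset.Iic k, p (μ k) (σ h))
    (hmono : ∀ j k : Fin N, j ≤ k → CT (σ j) ≤ CT (σ k)) :
    ∑ j : C, (w j + α j) * CT j ≤
      2 * ∑ k : Fin N, θ k * parallelRHS p (μ k) ((Finset.Iic k).image σ) := by
  classical
  have hinj : Function.Injective σ := hσ.1
  have hCT0 : ∀ k : Fin N, 0 ≤ CT (σ k) := fun k => by
    rw [hCT]; exact Finset.sum_nonneg fun h _ => hp _ _
  have h1 : ∑ j : C, (w j + α j) * CT j
      = ∑ m : Fin N, (w (σ m) + α (σ m)) * CT (σ m) :=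
    (Fintype.sum_bijective σ hσ _ _ fun m => rfl).symm
  have h2 : ∑ m : Fin N, (w (σ m) + α (σ m)) * CT (σ m)
      = ∑ k : Fin N, ∑ m ∈ Finset.univ.filter (fun m : Fin N => m ≤ k ∧ σ m ∈ F k),
          θ k * p (μ k) (σ m) * CT (σ m) := by
    calc ∑ m : Fin N, (w (σ m) + α (σ m)) * CT (σ m)
        = ∑ m : Fin N, ∑ k : Fin N,
            if m ≤ k ∧ σ m ∈ F k then θ k * p (μ k) (σ m) * CT (σ m) else 0 := by
          refine Finset.sum_congr rfl fun m _ => ?_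
          rw [hdual m, Finset.sum_mul, ← Finset.sum_filter]
      _ = ∑ k : Fin N, ∑ m : Fin N,
            if m ≤ k ∧ σ m ∈ F k then θ k * p (μ k) (σ m) * CT (σ m) else 0 :=
          Finset.sum_comm
      _ = _ := by
          refine Finset.sum_congr rfl fun k _ => ?_
          rw [Finset.sum_filter]
  rw [h1, h2, Finset.mul_sum]
  refine Finset.sum_le_sum fun k _ => ?_
  have hS : ∑ j ∈ (Finset.Iic k).image σ, p (μ k) j
      = ∑ h ∈ Finset.Iic k, p (μ k) (σ h) :=
    Finset.sum_image (fun a _ b _ h => hinj h)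
  have step1 : ∑ m ∈ Finset.univ.filter (fun m : Fin N => m ≤ k ∧ σ m ∈ F k),
        θ k * p (μ k) (σ m) * CT (σ m)
      ≤ ∑ m ∈ Finset.univ.filter (fun m : Fin N => m ≤ k ∧ σ m ∈ F k),
        θ k * p (μ k) (σ m) * CT (σ k) := by
    refine Finset.sum_le_sum fun m hm => ?_
    have hm' := (Finset.mem_filter.mp hm).2.1
    exact mul_le_mul_of_nonneg_left (hmono _ _ hm') (mul_nonneg (hθ k) (hp _ _))
  have step2 : ∑ m ∈ Finset.univ.filter (fun m : Fin N => m ≤ k ∧ σ m ∈ F k),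
        θ k * p (μ k) (σ m) * CT (σ k)
      ≤ ∑ m ∈ Finset.Iic k, θ k * p (μ k) (σ m) * CT (σ k) := by
    refine Finset.sum_le_sum_of_subset_of_nonneg ?_ ?_
    · intro m hm
      exact Finset.mem_Iic.mpr (Finset.mem_filter.mp hm).2.1
    · intro m _ _
      exact mul_nonneg (mul_nonneg (hθ k) (hp _ _)) (hCT0 k)
  have step3 : ∑ m ∈ Finset.Iic k, θ k * p (μ k) (σ m) * CT (σ k)
      = θ k * (∑ h ∈ Finset.Iic k, p (μ k) (σ h)) ^ 2 := by
    rw [hCT k, ← Finset.sum_mul, ← Finset.mul_sum]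
    ring
  have step4 : θ k * (∑ h ∈ Finset.Iic k, p (μ k) (σ h)) ^ 2
      ≤ 2 * (θ k * parallelRHS p (μ k) ((Finset.Iic k).image σ)) := by
    have hQ : 0 ≤ ∑ j ∈ (Finset.Iic k).image σ, (p (μ k) j) ^ 2 :=
      Finset.sum_nonneg fun j _ => sq_nonneg _
    have hrhs : 2 * (θ k * parallelRHS p (μ k) ((Finset.Iic k).image σ))
        = θ k * ((∑ h ∈ Finset.Iic k, p (μ k) (σ h)) ^ 2
            + ∑ j ∈ (Finset.Iic k).image σ, (p (μ k) j) ^ 2) := by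
      unfold parallelRHS
      rw [hS]; ring
    rw [hrhs]
    exact mul_le_mul_of_nonneg_left (le_add_of_nonneg_right hQ) (hθ k)
  calc _ ≤ _ := step1
    _ ≤ _ := step2
    _ = _ := step3
    _ ≤ _ := step4
end

section
/- Let σ be an enumeration of C, μ : Fin N → L, θ : Fin N → ℝ with θ k ≥ 0, and finite sets F : Fin N → Finset C with F k ⊆ A_k := {σ 1, …, σ k}. Let w, α : C → ℝ with w j ≥ 0, α j ≥ 0 satisfy the dual equalities: for every m : Fin N, w(σ m) + α(σ m) = ∑_{k ≥ m, σ m ∈ F k} θ k · p (μ k) (σ m). Then for every C' : C → ℝ satisfying the parallel inequalities and C' j ≤ D j for all j, one has the weak-duality bound ∑_{k : Fin N} θ k · f (μ k) (F k) − ∑_{j ∈ C} α j · D j ≤ ∑_{j ∈ C} w j · C' j. (Weak LP duality between the paper's Primal LP and Dual LP, used in the proof of its approximation theorem, Theorem 8.) -/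
/-- Weak LP duality between the paper's Primal LP and Dual LP (used in the
proof of the approximation theorem, Theorem 8): any dual solution given by the
dual equalities is bounded by any primal solution satisfying the parallel
inequalities and the deadline constraints. -/
theorem COFAIR_weak_duality
    {L C : Type*} [Fintype L] [Nonempty L] [Fintype C] [Nonempty C]
    [DecidableEq C]
    (N : ℕ) (hN : Fintype.card C = N)
    (p : L → C → ℝ) (hp : ∀ ℓ j, 0 ≤ p ℓ j)
    (D : C → ℝ) (hD : ∀ j, 0 < D j)
    (σ : Fin N → C) (hσ : Function.Bijective σ)
    (μ : Fin N → L)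
    (θ : Fin N → ℝ) (hθ : ∀ k, 0 ≤ θ k)
    (F : Fin N → Finset C) (hF : ∀ k : Fin N, F k ⊆ (Finset.Iic k).image σ)
    (w : C → ℝ) (hw : ∀ j, 0 ≤ w j)
    (α : C → ℝ) (hα : ∀ j, 0 ≤ α j)
    (hdual : ∀ m : Fin N,
        w (σ m) + α (σ m) =
          ∑ k ∈ Finset.univ.filter (fun k : Fin N => m ≤ k ∧ σ m ∈ F k),
            θ k * p (μ k) (σ m))
    (C' : C → ℝ)
    (hpar : ∀ ℓ : L, ∀ A : Finset C, ∑ j ∈ A, p ℓ j * C' j ≥ parallelRHS p ℓ A)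
    (hdl : ∀ j : C, C' j ≤ D j) :
    ∑ k : Fin N, θ k * parallelRHS p (μ k) (F k) - ∑ j : C, α j * D j ≤
      ∑ j : C, w j * C' j := by
  classical
  have hinj := hσ.injective
  have hmem : ∀ (m k : Fin N), σ m ∈ F k → m ≤ k := by
    intro m k h
    obtain ⟨m', hm', he⟩ := Finset.mem_image.mp (hF k h)
    rw [← hinj he]
    exact Finset.mem_Iic.mp hm'
  have step1 : ∑ j : C, (w j + α j) * C' j =
      ∑ k : Fin N, θ k * ∑ j ∈ F k, p (μ k) j * C' j := by
    rw [← Fintype.sum_bijective σ hσ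
      (fun m => (w (σ m) + α (σ m)) * C' (σ m))
      (fun j => (w j + α j) * C' j) (fun m => rfl)]
    have h1 : ∀ m : Fin N, (w (σ m) + α (σ m)) * C' (σ m) =
        ∑ k : Fin N, if m ≤ k ∧ σ m ∈ F k
          then θ k * p (μ k) (σ m) * C' (σ m) else 0 := by
      intro m
      rw [hdual m, Finset.sum_mul, Finset.sum_filter]
    simp_rw [h1]
    rw [Finset.sum_comm]
    congr 1; ext k
    have h2 : ∀ m : Fin N, (if m ≤ k ∧ σ m ∈ F k
        then θ k * p (μ k) (σ m) * C' (σ m) else 0) =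
        (if σ m ∈ F k then θ k * p (μ k) (σ m) * C' (σ m) else 0) := by
      intro m
      by_cases h : σ m ∈ F k
      · simp [h, hmem m k h]
      · simp [h]
    simp_rw [h2]
    rw [Fintype.sum_bijective σ hσ
      (fun m => if σ m ∈ F k then θ k * p (μ k) (σ m) * C' (σ m) else 0)
      (fun j => if j ∈ F k then θ k * p (μ k) j * C' j else 0) (fun m => rfl)]
    rw [← Finset.sum_filter, Finset.filter_univ_mem, Finset.mul_sum]
    congr 1; ext j; ring
  have step2 : ∑ k : Fin N, θ k * parallelRHS p (μ k) (F k) ≤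
      ∑ k : Fin N, θ k * ∑ j ∈ F k, p (μ k) j * C' j := by
    apply Finset.sum_le_sum
    intro k _
    exact mul_le_mul_of_nonneg_left (hpar (μ k) (F k)) (hθ k)
  have step3 : ∑ j : C, α j * C' j ≤ ∑ j : C, α j * D j := by
    apply Finset.sum_le_sum
    intro j _
    exact mul_le_mul_of_nonneg_left (hdl j) (hα j)
  have expand : ∑ j : C, (w j + α j) * C' j =
      ∑ j : C, w j * C' j + ∑ j : C, α j * C' j := by
    rw [← Finset.sum_add_distrib]; congr 1; ext j; ring
  linarith [step2, step3, expand, step1]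
end

section
/- Let σ be an enumeration of C, μ : Fin N → L, θ : Fin N → ℝ with θ k ≥ 0, and let w, α : C → ℝ with w j ≥ 0, α j ≥ 0 satisfy the dual equalities with all unscheduled coflows tail-feasible at every iteration (F k = A_k := {σ 1, …, σ k}): for every m : Fin N, w(σ m) + α(σ m) = ∑_{k ≥ m} θ k · p (μ k) (σ m). Define CT(σ k) = ∑_{h ≤ k} p (μ k) (σ h) and assume CT(σ j) ≤ CT(σ k) whenever j ≤ k. Let C' : C → ℝ satisfy the parallel inequalities and C' j ≤ D j for all j, and let Cσ : C → ℝ be completion times of a σ-order schedule satisfying Cσ j ≤ 2 · CT j for all j. Then ∑_{j ∈ C} w j · Cσ j ≤ 4 · ∑_{j ∈ C} w j · C' j + 4 · ∑_{j ∈ C} α j · D j. (Paper's Theorem 8: the σ-order schedule produced by COFAIR satisfies ∑ w_j C^σ_j ≤ 4 ∑ w_j C*_j + 4 ∑ α_j D_j; with α = 0 and a feasible optimal solution C* it is a 4-approximation of an optimal scheduler.) -/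
/-- Paper's Theorem 8 (approximation factor of COFAIR): the σ-order schedule
produced by COFAIR satisfies `∑ w_j Cσ_j ≤ 4 ∑ w_j C'_j + 4 ∑ α_j D_j` for any
`C'` feasible for the primal LP; with `α = 0` this is a 4-approximation. -/
theorem COFAIR_four_approximation
    {L C : Type*} [Fintype L] [Nonempty L] [Fintype C] [Nonempty C]
    [DecidableEq C]
    (N : ℕ) (hN : Fintype.card C = N)
    (p : L → C → ℝ) (hp : ∀ ℓ j, 0 ≤ p ℓ j)
    (D : C → ℝ) (hD : ∀ j, 0 < D j)
    (σ : Fin N → C) (hσ : Function.Bijective σ)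
    (μ : Fin N → L)
    (θ : Fin N → ℝ) (hθ : ∀ k, 0 ≤ θ k)
    (w : C → ℝ) (hw : ∀ j, 0 ≤ w j)
    (α : C → ℝ) (hα : ∀ j, 0 ≤ α j)
    (hdual : ∀ m : Fin N,
        w (σ m) + α (σ m) =
          ∑ k ∈ Finset.univ.filter (fun k : Fin N => m ≤ k),
            θ k * p (μ k) (σ m))
    (CT : C → ℝ)
    (hCT : ∀ k : Fin N, CT (σ k) = ∑ h ∈ Finset.Iic k, p (μ k) (σ h))
    (hmono : ∀ j k : Fin N, j ≤ k → CT (σ j) ≤ CT (σ k))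
    (C' : C → ℝ)
    (hpar : ∀ ℓ : L, ∀ A : Finset C, ∑ j ∈ A, p ℓ j * C' j ≥ parallelRHS p ℓ A)
    (hdl : ∀ j : C, C' j ≤ D j)
    (Cσ : C → ℝ) (hCσ : ∀ j : C, Cσ j ≤ 2 * CT j) :
    ∑ j : C, w j * Cσ j ≤
      4 * ∑ j : C, w j * C' j + 4 * ∑ j : C, α j * D j := by
  have hCT0 : ∀ j : C, 0 ≤ CT j := by
    intro j
    obtain ⟨m, rfl⟩ := hσ.2 j
    rw [hCT m]
    exact Finset.sum_nonneg fun h _ => hp _ _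
  have hsum : ∀ g : C → ℝ, ∑ j : C, g j = ∑ m : Fin N, g (σ m) :=
    fun g => (Fintype.sum_bijective σ hσ _ _ fun m => rfl).symm
  have filtEq : ∀ k : Fin N,
      Finset.univ.filter (fun m : Fin N => m ≤ k) = Finset.Iic k := by
    intro k; ext m; simp
  have hquad : ∀ k : Fin N,
      CT (σ k) ^ 2 ≤ 2 * ∑ h ∈ Finset.Iic k, p (μ k) (σ h) * C' (σ h) := by
    intro k
    set A := (Finset.Iic k).image σ with hA
    have hinj : ∀ a ∈ Finset.Iic k, ∀ b ∈ Finset.Iic k, σ a = σ b → a = b :=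
      fun a _ b _ h => hσ.1 h
    have h1 : ∑ j ∈ A, p (μ k) j * C' j
        = ∑ h ∈ Finset.Iic k, p (μ k) (σ h) * C' (σ h) := Finset.sum_image hinj
    have h2 : ∑ j ∈ A, p (μ k) j = CT (σ k) := by
      rw [Finset.sum_image hinj, hCT k]
    have h3 := hpar (μ k) A
    have h4 : 0 ≤ ∑ j ∈ A, (p (μ k) j) ^ 2 :=
      Finset.sum_nonneg fun j _ => sq_nonneg _
    unfold parallelRHS at h3
    rw [← h1, ← h2]
    nlinarith [h3, h4]
  have S1 : ∑ j : C, w j * Cσ j ≤ 2 * ∑ j : C, w j * CT j := by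
    rw [Finset.mul_sum]
    apply Finset.sum_le_sum
    intro j _
    calc w j * Cσ j ≤ w j * (2 * CT j) :=
          mul_le_mul_of_nonneg_left (hCσ j) (hw j)
      _ = 2 * (w j * CT j) := by ring
  have S2 : ∑ j : C, w j * CT j ≤ ∑ j : C, (w j + α j) * CT j := by
    apply Finset.sum_le_sum
    intro j _
    nlinarith [hα j, hCT0 j]
  have S3 : ∑ m : Fin N, (w (σ m) + α (σ m)) * CT (σ m)
      ≤ 2 * ∑ m : Fin N, (w (σ m) + α (σ m)) * C' (σ m) := by
    calc ∑ m : Fin N, (w (σ m) + α (σ m)) * CT (σ m)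
        = ∑ m : Fin N, ∑ k ∈ Finset.univ.filter (fun k : Fin N => m ≤ k),
            θ k * p (μ k) (σ m) * CT (σ m) := by
          refine Finset.sum_congr rfl fun m _ => ?_
          rw [hdual m, Finset.sum_mul]
      _ = ∑ k : Fin N, ∑ m ∈ Finset.univ.filter (fun m : Fin N => m ≤ k),
            θ k * p (μ k) (σ m) * CT (σ m) := by
          simp only [Finset.sum_filter]
          exact Finset.sum_comm
      _ ≤ ∑ k : Fin N, θ k * CT (σ k) ^ 2 := by
          refine Finset.sum_le_sum fun k _ => ?_
          rw [filtEq k]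
          calc ∑ m ∈ Finset.Iic k, θ k * p (μ k) (σ m) * CT (σ m)
              ≤ ∑ m ∈ Finset.Iic k, θ k * p (μ k) (σ m) * CT (σ k) := by
                refine Finset.sum_le_sum fun m hm => ?_
                exact mul_le_mul_of_nonneg_left
                  (hmono m k (Finset.mem_Iic.mp hm))
                  (mul_nonneg (hθ k) (hp _ _))
            _ = θ k * CT (σ k) * ∑ m ∈ Finset.Iic k, p (μ k) (σ m) := by
                rw [Finset.mul_sum]
                exact Finset.sum_congr rfl fun m _ => by ring
            _ = θ k * CT (σ k) ^ 2 := by rw [← hCT k]; ring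
      _ ≤ ∑ k : Fin N,
            θ k * (2 * ∑ h ∈ Finset.Iic k, p (μ k) (σ h) * C' (σ h)) := by
          refine Finset.sum_le_sum fun k _ => ?_
          exact mul_le_mul_of_nonneg_left (hquad k) (hθ k)
      _ = 2 * ∑ k : Fin N, ∑ h ∈ Finset.Iic k,
            θ k * p (μ k) (σ h) * C' (σ h) := by
          rw [Finset.mul_sum]
          refine Finset.sum_congr rfl fun k _ => ?_
          simp only [Finset.mul_sum]
          exact Finset.sum_congr rfl fun h _ => by ring
      _ = 2 * ∑ h : Fin N, ∑ k ∈ Finset.univ.filter (fun k : Fin N => h ≤ k),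
            θ k * p (μ k) (σ h) * C' (σ h) := by
          congr 1
          simp only [← filtEq, Finset.sum_filter]
          exact Finset.sum_comm
      _ = 2 * ∑ h : Fin N, (w (σ h) + α (σ h)) * C' (σ h) := by
          congr 1
          refine Finset.sum_congr rfl fun h _ => ?_
          rw [hdual h, Finset.sum_mul]
  have S4 : ∑ m : Fin N, (w (σ m) + α (σ m)) * C' (σ m)
      ≤ ∑ j : C, w j * C' j + ∑ j : C, α j * D j := by
    rw [hsum (fun j => w j * C' j), hsum (fun j => α j * D j),
      ← Finset.sum_add_distrib]
    refine Finset.sum_le_sum fun m _ => ?_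
    have := mul_le_mul_of_nonneg_left (hdl (σ m)) (hα (σ m))
    nlinarith
  have key : ∑ j : C, (w j + α j) * CT j
      = ∑ m : Fin N, (w (σ m) + α (σ m)) * CT (σ m) :=
    hsum (fun j => (w j + α j) * CT j)
  have key2 : ∑ j : C, w j * Cσ j
      ≤ 4 * ∑ m : Fin N, (w (σ m) + α (σ m)) * C' (σ m) := by
    calc ∑ j : C, w j * Cσ j ≤ 2 * ∑ j : C, w j * CT j := S1
      _ ≤ 2 * ∑ j : C, (w j + α j) * CT j := by linarith
      _ = 2 * ∑ m : Fin N, (w (σ m) + α (σ m)) * CT (σ m) := by rw [key]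
      _ ≤ 4 * ∑ m : Fin N, (w (σ m) + α (σ m)) * C' (σ m) := by linarith
  linarith
end

section
/- Let N be a positive natural number, p : Fin N → ℝ with p h ≥ 0, and CT : Fin N → ℝ with CT k ≥ ∑_{h ≤ k} p h for every k. Then for every subset A ⊆ Fin N, ∑_{k ∈ A} p k · CT k ≥ (1/2)·((∑_{k ∈ A} p k)² + ∑_{k ∈ A} (p k)²). (The single-machine parallel-inequality lemma, used in the paper's proofs of Theorems 4 and 7: completion times that dominate the prefix volumes of some sequencing satisfy all parallel inequalities of Queyranne's completion-time polyhedron.) -/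
lemma smpi_key {N : ℕ} (p : Fin N → ℝ) (A : Finset (Fin N)) :
    2 * ∑ k ∈ A, p k * ∑ h ∈ A.filter (· ≤ k), p h
      = (∑ k ∈ A, p k) ^ 2 + ∑ k ∈ A, (p k) ^ 2 := by
  have e1 : ∑ k ∈ A, p k * ∑ h ∈ A.filter (· ≤ k), p h
      = ∑ k ∈ A, ∑ h ∈ A, if h ≤ k then p k * p h else 0 := by
    refine Finset.sum_congr rfl fun k _ => ?_
    rw [Finset.mul_sum, Finset.sum_filter]
  have e2 : (∑ k ∈ A, ∑ h ∈ A, if k < h then p k * p h else 0)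
      = ∑ k ∈ A, ∑ h ∈ A, if h < k then p k * p h else 0 := by
    rw [Finset.sum_comm]
    refine Finset.sum_congr rfl fun k _ => Finset.sum_congr rfl fun h _ => ?_
    rw [mul_comm]
  have e3 : (∑ k ∈ A, p k) ^ 2 = ∑ k ∈ A, ∑ h ∈ A, p k * p h := by
    rw [sq, Finset.sum_mul_sum]
  have e4 : ∀ k h : Fin N, (if h ≤ k then p k * p h else 0)
      + (if k < h then p k * p h else 0) = p k * p h := by
    intro k h
    rcases le_or_gt h k with hle | hlt
    · simp [hle, not_lt.mpr hle]
    · simp [not_le.mpr hlt, hlt]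
  have e5 : ∀ k h : Fin N, (if h < k then p k * p h else 0)
      = (if h ≤ k then p k * p h else 0) - (if h = k then p k * p h else 0) := by
    intro k h
    rcases lt_trichotomy h k with h1 | h1 | h1
    · simp [h1, le_of_lt h1, ne_of_lt h1]
    · simp [h1]
    · simp [not_lt.mpr (le_of_lt h1), not_le.mpr h1, ne_of_gt h1]
  have ediag : ∀ k ∈ A, (∑ h ∈ A, if h = k then p k * p h else 0) = (p k) ^ 2 := by
    intro k hk
    rw [Finset.sum_ite_eq' A k (fun h => p k * p h)]
    simp [hk, sq]
  have : (∑ k ∈ A, p k) ^ 2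
      = ∑ k ∈ A, p k * ∑ h ∈ A.filter (· ≤ k), p h
        + (∑ k ∈ A, p k * ∑ h ∈ A.filter (· ≤ k), p h - ∑ k ∈ A, (p k) ^ 2) := by
    rw [e1, e3]
    have : ∑ k ∈ A, ∑ h ∈ A, p k * p h
        = ∑ k ∈ A, ∑ h ∈ A, ((if h ≤ k then p k * p h else 0)
            + (if k < h then p k * p h else 0)) := by
      refine Finset.sum_congr rfl fun k _ => Finset.sum_congr rfl fun h _ => (e4 k h).symm
    rw [this]
    simp only [Finset.sum_add_distrib]
    rw [e2]
    congr 1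
    have : ∑ k ∈ A, ∑ h ∈ A, (if h < k then p k * p h else 0)
        = ∑ k ∈ A, ∑ h ∈ A, ((if h ≤ k then p k * p h else 0)
            - (if h = k then p k * p h else 0)) := by
      refine Finset.sum_congr rfl fun k _ => Finset.sum_congr rfl fun h _ => e5 k h
    rw [this]
    simp only [Finset.sum_sub_distrib]
    congr 1
    exact Finset.sum_congr rfl ediag
  rw [this]; ring

/-- The single-machine parallel-inequality lemma (used in the paper's proofs of
Theorems 4 and 7): completion times dominating the prefix volumes of a
sequencing satisfy all parallel inequalities of Queyranne's completion-time
polyhedron. -/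
theorem single_machine_parallel_inequalities
    (N : ℕ) (hN : 0 < N)
    (p : Fin N → ℝ) (hp : ∀ h, 0 ≤ p h)
    (CT : Fin N → ℝ)
    (hCT : ∀ k : Fin N, CT k ≥ ∑ h ∈ Finset.Iic k, p h) :
    ∀ A : Finset (Fin N),
      ∑ k ∈ A, p k * CT k ≥
        (1 / 2) * ((∑ k ∈ A, p k) ^ 2 + ∑ k ∈ A, (p k) ^ 2) := by
  intro A
  have step : ∀ k ∈ A, p k * ∑ h ∈ A.filter (· ≤ k), p h ≤ p k * CT k := by
    intro k hk
    refine mul_le_mul_of_nonneg_left ?_ (hp k)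
    refine le_trans (Finset.sum_le_sum_of_subset_of_nonneg ?_ (fun i _ _ => hp i)) (hCT k)
    intro h hh
    simp only [Finset.mem_filter] at hh
    simpa using hh.2
  have h1 : ∑ k ∈ A, p k * ∑ h ∈ A.filter (· ≤ k), p h ≤ ∑ k ∈ A, p k * CT k :=
    Finset.sum_le_sum step
  have h2 := smpi_key p A
  linarith
end
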